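/- arXiv:1611.05909 — 3 statements merged into one kernel-verified Lean document; each statement's English description precedes it below -/
import Mathlib

section
/- For fixed $\rho\in[0,1)$ and $c'>0$, the function $\tau^2\mapsto \big(1+\frac{1-\rho}{\tau^2}\big)\log\big(n\,c'\sqrt{\frac{1-\rho+\tau^2}{1-\rho}}\big)$ is maximized (in the sense that its critical point equation $2\log(nc')+\log(1+1/x)-1/x=0$ with $x=(1-\rho)/\tau^2$ holds) at $\tau^2=(1-\rho)\big(2\log n+\log\log n+2\log c'+\log 2\big)(1+o(1))$ as $n\to\infty$. -/
open Filter Real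

private lemma aux_div_div (a b c : ℝ) (hc : c ≠ 0) : (a / c) / (b / c) = a / b := by
  rcases eq_or_ne b 0 with h | h
  · simp [h]
  · field_simp

private lemma aux_cancel (P a b : ℝ) (ha : a ≠ 0) : P / a * (a / b) = P / b := by
  rcases eq_or_ne b 0 with h | h
  · simp [h]
  · field_simp

/-- The adaptive choice of `τ²` maximizing the false positive probability: if
`τₙ² > 0` satisfies the critical point equation
`2 log(n c') + log(1 + 1/xₙ) - 1/xₙ = 0` with `xₙ = (1-ρ)/τₙ²`, then
`τₙ² = (1-ρ)(2 log n + log log n + 2 log c' + log 2)(1 + o(1))`. -/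
theorem stmt11 (ρ c' : ℝ) (hρ0 : 0 ≤ ρ) (hρ1 : ρ < 1) (hc' : 0 < c')
    (τsq : ℕ → ℝ) (hτ : ∀ n, 3 ≤ n → 0 < τsq n)
    (hcrit : ∀ n : ℕ, 3 ≤ n →
      2 * Real.log (n * c') + Real.log (1 + τsq n / (1 - ρ)) - τsq n / (1 - ρ) = 0) :
    Tendsto
      (fun n : ℕ => τsq n /
        ((1 - ρ) * (2 * Real.log n + Real.log (Real.log n) + 2 * Real.log c' + Real.log 2)))
      atTop (nhds 1) := by
  have h1ρ : (0:ℝ) < 1 - ρ := by linarith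
  set L : ℕ → ℝ := fun n => Real.log (n * c') with hLdef
  set y : ℕ → ℝ := fun n => τsq n / (1 - ρ) with hydef
  have hy0 : ∀ n, 3 ≤ n → 0 < y n := fun n hn => div_pos (hτ n hn) h1ρ
  have hy : ∀ n, 3 ≤ n → y n = 2 * L n + Real.log (1 + y n) := by
    intro n hn; have := hcrit n hn; simp only [hLdef, hydef]; linarith
  -- L → ∞
  have hnc : Tendsto (fun n : ℕ => (n:ℝ) * c') atTop atTop :=
    (tendsto_natCast_atTop_atTop).atTop_mul_const hc'
  have hL : Tendsto L atTop atTop := Real.tendsto_log_atTop.comp hnc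
  -- y > 2L eventually, hence y → ∞
  have hygt : ∀ n, 3 ≤ n → 2 * L n < y n := by
    intro n hn
    have h1 : (0:ℝ) < Real.log (1 + y n) :=
      Real.log_pos (by linarith [hy0 n hn])
    linarith [hy n hn]
  have hytop : Tendsto y atTop atTop := by
    refine tendsto_atTop_mono' atTop ?_ (hL.const_mul_atTop (by norm_num : (0:ℝ) < 2))
    filter_upwards [eventually_ge_atTop 3] with n hn using (hygt n hn).le
  -- log t / t → 0
  have hlogdiv : Tendsto (fun t : ℝ => Real.log t / t) atTop (nhds 0) :=
    Real.isLittleO_log_id_atTop.tendsto_div_nhds_zero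
  -- log(1+y)/y → 0
  have h1y : Tendsto (fun n => 1 + y n) atTop atTop :=
    tendsto_atTop_add_const_left _ 1 hytop
  have hB0 : Tendsto (fun n => Real.log (1 + y n) / (1 + y n)) atTop (nhds 0) :=
    hlogdiv.comp h1y
  have hrat : Tendsto (fun n => (1 + y n) / y n) atTop (nhds 1) := by
    have h1 : Tendsto (fun n => 1 / y n) atTop (nhds 0) := by
      have := hytop.inv_tendsto_atTop; simp only [one_div]; exact this
    have h2 : Tendsto (fun n => 1 / y n + 1) atTop (nhds 1) := by
      simpa using h1.add tendsto_const_nhds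
    apply h2.congr'
    filter_upwards [eventually_ge_atTop 3] with n hn
    have := (hy0 n hn).ne'
    field_simp
  have hB : Tendsto (fun n => Real.log (1 + y n) / y n) atTop (nhds 0) := by
    have := hB0.mul hrat
    rw [zero_mul] at this
    apply this.congr'
    filter_upwards [eventually_ge_atTop 3] with n hn
    exact aux_cancel _ _ _ (by linarith [hy0 n hn])
  -- y/(2L) → 1
  have h2Ly : Tendsto (fun n => 2 * L n / y n) atTop (nhds 1) := by
    have h1 : Tendsto (fun n => 1 - Real.log (1 + y n) / y n) atTop (nhds 1) := by
      simpa using (tendsto_const_nhds (x := (1:ℝ))).sub hB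
    apply h1.congr'
    filter_upwards [eventually_ge_atTop 3] with n hn
    have hyne := (hy0 n hn).ne'
    rw [eq_div_iff hyne, sub_mul, div_mul_cancel₀ _ hyne, one_mul]
    linarith [hy n hn]
  have hy2L : Tendsto (fun n => y n / (2 * L n)) atTop (nhds 1) := by
    have := h2Ly.inv₀ one_ne_zero
    rw [inv_one] at this
    apply this.congr
    intro n; exact inv_div _ _
  -- A := log(1+y)/(2L) → 0
  have hA : Tendsto (fun n => Real.log (1 + y n) / (2 * L n)) atTop (nhds 0) := by
    have := hB.mul hy2L
    rw [zero_mul] at this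
    apply this.congr'
    filter_upwards [eventually_ge_atTop 3] with n hn
    exact aux_cancel _ _ _ (hy0 n hn).ne'
  -- log n → ∞
  have hlogn : Tendsto (fun n : ℕ => Real.log n) atTop atTop :=
    Real.tendsto_log_atTop.comp tendsto_natCast_atTop_atTop
  -- (2 log n)/(2 L n) → 1
  have hRat2 : Tendsto (fun n : ℕ => 2 * Real.log n / (2 * L n)) atTop (nhds 1) := by
    have h1 : Tendsto (fun n : ℕ => Real.log c' / Real.log n) atTop (nhds 0) := by
      simpa [div_eq_mul_inv] using
        (tendsto_const_nhds (x := Real.log c')).mul hlogn.inv_tendsto_atTop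
    have h2 : Tendsto (fun n : ℕ => (1 + Real.log c' / Real.log n)⁻¹) atTop (nhds 1) := by
      have := (((tendsto_const_nhds (x := (1:ℝ))).add h1).inv₀ (by norm_num))
      simpa using this
    apply h2.congr'
    filter_upwards [hlogn.eventually_gt_atTop 0, hL.eventually_gt_atTop 0,
      eventually_ge_atTop 1] with n hn1 hn2 hn3
    have hLn : L n = Real.log n + Real.log c' := by
      simp only [hLdef]
      exact Real.log_mul (by positivity) hc'.ne'
    rw [hLn]
    have h3 : 1 + Real.log c' / Real.log n = (Real.log n + Real.log c') / Real.log n := by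
      field_simp
    rw [h3, inv_div, mul_div_mul_left _ _ (two_ne_zero)]
  -- B := log(2 log n)/(2 L n) → 0
  have h2logn : Tendsto (fun n : ℕ => 2 * Real.log n) atTop atTop :=
    hlogn.const_mul_atTop (by norm_num)
  have hC : Tendsto (fun n : ℕ => Real.log (2 * Real.log n) / (2 * L n)) atTop (nhds 0) := by
    have := (hlogdiv.comp h2logn).mul hRat2
    rw [zero_mul] at this
    apply this.congr'
    filter_upwards [hlogn.eventually_gt_atTop 0] with n hn
    exact aux_cancel _ _ _ (by positivity)
  -- final combination
  have hfin : Tendsto (fun n => (1 + Real.log (1 + y n) / (2 * L n)) /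
      (1 + Real.log (2 * Real.log n) / (2 * L n))) atTop (nhds 1) := by
    have := ((tendsto_const_nhds (x := (1:ℝ))).add hA).div
      ((tendsto_const_nhds (x := (1:ℝ))).add hC) (by norm_num)
    simp only [add_zero, div_one] at this; exact this
  apply hfin.congr'
  filter_upwards [eventually_ge_atTop 3, hL.eventually_gt_atTop 0,
    hlogn.eventually_gt_atTop 0] with n hn hLn hln
  have h2L : (2 : ℝ) * L n ≠ 0 := by positivity
  have e1 : 1 + Real.log (1 + y n) / (2 * L n) = (2 * L n + Real.log (1 + y n)) / (2 * L n) := by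
    field_simp
  have e2 : 1 + Real.log (2 * Real.log n) / (2 * L n)
      = (2 * L n + Real.log (2 * Real.log n)) / (2 * L n) := by
    field_simp
  have hD : (1 - ρ) * (2 * Real.log n + Real.log (Real.log n) + 2 * Real.log c' + Real.log 2)
      = (1 - ρ) * (2 * L n + Real.log (2 * Real.log n)) := by
    have hLn' : L n = Real.log n + Real.log c' := by
      simp only [hLdef]
      exact Real.log_mul (by positivity) hc'.ne'
    have hl2 : Real.log (2 * Real.log n) = Real.log 2 + Real.log (Real.log n) :=
      Real.log_mul (by norm_num) hln.ne'
    rw [hLn', hl2]; ring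
  rw [e1, e2, aux_div_div _ _ _ h2L, ← hy n hn, hD, ← div_div]
end

section
/- Let $c_n\in(0,1)$ with $c_n\to 1$, and let $z_1,z_2,\dots$ be i.i.d. standard normal. Then $\frac{\sqrt{1-c_n}}{n}\sum_{i=1}^n \exp(\tfrac{c_n}{2}z_i^2) - \Big(2\Phi\Big(\sqrt{\tfrac{2(1-c_n)}{c_n}\log\tfrac{n}{\sqrt{1-c_n}}}\Big)-1\Big) \to 0$ in probability as $n\to\infty$. -/
open MeasureTheory ProbabilityTheory Filter

set_option maxHeartbeats 1000000

/-- The standard normal cumulative distribution function. -/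
noncomputable def Phi (t : ℝ) : ℝ :=
  ∫ x in Set.Iic t, (Real.sqrt (2 * Real.pi))⁻¹ * Real.exp (-x ^ 2 / 2)

namespace Stmt16Aux

open Real Set
open scoped ENNReal NNReal

noncomputable def pdf (x : ℝ) : ℝ := (Real.sqrt (2 * Real.pi))⁻¹ * Real.exp (-x ^ 2 / 2)

lemma pdf_eq : gaussianPDFReal 0 1 = pdf := by
  funext x
  simp [gaussianPDFReal, pdf]

lemma pdf_nonneg (x : ℝ) : 0 ≤ pdf x := by
  unfold pdf; positivity

lemma pdf_meas : Measurable pdf := by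
  unfold pdf; fun_prop

lemma pdf_integrable : Integrable pdf := pdf_eq ▸ integrable_gaussianPDFReal 0 1

lemma pdf_integral : ∫ x, pdf x = 1 := pdf_eq ▸ integral_gaussianPDFReal_eq_one 0 one_ne_zero

lemma pdf_even (x : ℝ) : pdf (-x) = pdf x := by simp [pdf]

lemma sqrt_two_pi_ge_one : (1:ℝ) ≤ Real.sqrt (2 * Real.pi) := by
  rw [show (1:ℝ) = Real.sqrt 1 by simp]
  apply Real.sqrt_le_sqrt
  nlinarith [Real.pi_gt_three]

lemma integral_gaussian_eq (f : ℝ → ℝ) :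
    ∫ x, f x ∂(gaussianReal 0 1) = ∫ x, f x * pdf x := by
  rw [gaussianReal_of_var_ne_zero 0 one_ne_zero]
  have h : gaussianPDF 0 1 = fun x => ((gaussianPDFReal 0 1 x).toNNReal : ℝ≥0∞) := rfl
  rw [h, integral_withDensity_eq_integral_smul ((measurable_gaussianPDFReal 0 1).real_toNNReal) f]
  congr 1
  funext x
  rw [NNReal.smul_def, smul_eq_mul, Real.coe_toNNReal _ (gaussianPDFReal_nonneg 0 1 x),
    pdf_eq, mul_comm]

lemma Phi_def' (t : ℝ) : Phi t = ∫ x in Iic t, pdf x := rfl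

lemma Phi_neg (t : ℝ) : Phi (-t) = 1 - Phi t := by
  have h1 : Phi (-t) = ∫ x in Ioi t, pdf x := by
    rw [Phi_def']
    calc ∫ x in Iic (-t), pdf x = ∫ x in Iic (-t), pdf (-x) := by simp [pdf_even]
      _ = ∫ x in Ioi (-(-t)), pdf x := integral_comp_neg_Iic _ _
      _ = ∫ x in Ioi t, pdf x := by rw [neg_neg]
  have h2 : Phi t + ∫ x in Ioi t, pdf x = 1 := by
    have := integral_add_compl (measurableSet_Iic (a := t)) pdf_integrable
    rw [Set.compl_Iic] at this
    rw [Phi_def', this, pdf_integral]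
  rw [h1]; linarith

lemma Phi_interval {t : ℝ} (h : 0 ≤ t) : ∫ x in (-t)..t, pdf x = 2 * Phi t - 1 := by
  rw [intervalIntegral.integral_of_le (by linarith)]
  have hu : (∫ x in Iic (-t), pdf x) + ∫ x in Ioc (-t) t, pdf x = ∫ x in Iic t, pdf x := by
    rw [← setIntegral_union (Set.Iic_disjoint_Ioc le_rfl) measurableSet_Ioc
        pdf_integrable.integrableOn pdf_integrable.integrableOn,
      Set.Iic_union_Ioc_eq_Iic (by linarith)]
  have h2 := Phi_neg t
  rw [Phi_def' (-t)] at h2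
  have h3 : Phi t = ∫ x in Iic t, pdf x := Phi_def' t
  linarith

lemma integral_scaled {r s : ℝ} (hr : 0 < r) (hs : 0 ≤ s) :
    ∫ x in (-s)..s, pdf (r * x) = r⁻¹ * (2 * Phi (r * s) - 1) := by
  rw [intervalIntegral.integral_comp_mul_left (fun x => pdf x) hr.ne', mul_neg,
    Phi_interval (by positivity), smul_eq_mul]

lemma tail_Ioi {s : ℝ} (hs : 1 ≤ s) : ∫ x in Ioi s, pdf x ≤ Real.exp (-s^2/2) := by
  have hs0 : 0 < s := by linarith
  have key : ∫ x in Ioi s, pdf x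
      ≤ ∫ x in Ioi s, (Real.sqrt (2*Real.pi))⁻¹ * Real.exp (s^2/2) * Real.exp (-s * x) := by
    apply setIntegral_mono_on pdf_integrable.integrableOn
      (((exp_neg_integrableOn_Ioi s hs0)).const_mul _) measurableSet_Ioi
    intro x hx
    unfold pdf
    rw [mul_assoc, ← Real.exp_add]
    have : -x^2/2 ≤ s^2/2 + -s*x := by nlinarith [sq_nonneg (x - s)]
    have h2 := Real.exp_le_exp.mpr this
    have h3 : (0:ℝ) ≤ (Real.sqrt (2*Real.pi))⁻¹ := by positivity
    exact mul_le_mul_of_nonneg_left h2 h3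
  have hint : ∫ x in Ioi s, Real.exp (-s * x) = s⁻¹ * Real.exp (-(s*s)) := by
    have h := integral_comp_mul_left_Ioi (fun x => Real.exp (-x)) s hs0
    simp only [smul_eq_mul] at h
    calc ∫ x in Ioi s, Real.exp (-s * x) = ∫ x in Ioi s, Real.exp (-(s * x)) := by
          simp [neg_mul]
      _ = s⁻¹ * ∫ x in Ioi (s*s), Real.exp (-x) := h
      _ = s⁻¹ * Real.exp (-(s*s)) := by rw [integral_exp_neg_Ioi]
  rw [integral_const_mul, hint] at key
  refine key.trans ?_
  have h1 : (Real.sqrt (2*Real.pi))⁻¹ ≤ 1 := by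
    rw [inv_le_one_iff₀]; right; exact sqrt_two_pi_ge_one
  have h2 : s⁻¹ ≤ 1 := by rw [inv_le_one_iff₀]; right; exact hs
  have h3 : Real.exp (s^2/2) * (s⁻¹ * Real.exp (-(s*s))) ≤ Real.exp (-s^2/2) := by
    rw [mul_comm s⁻¹ _, ← mul_assoc, ← Real.exp_add]
    have he : s^2/2 + -(s*s) = -s^2/2 := by ring
    rw [he]
    nlinarith [Real.exp_pos (-s^2/2)]
  calc (Real.sqrt (2*Real.pi))⁻¹ * Real.exp (s^2/2) * (s⁻¹ * Real.exp (-(s*s)))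
      ≤ 1 * Real.exp (s^2/2) * (s⁻¹ * Real.exp (-(s*s))) := by
        apply mul_le_mul_of_nonneg_right _ (by positivity)
        exact mul_le_mul_of_nonneg_right h1 (by positivity)
    _ = Real.exp (s^2/2) * (s⁻¹ * Real.exp (-(s*s))) := by ring
    _ ≤ Real.exp (-s^2/2) := h3

lemma tail_Iic {s : ℝ} (hs : 1 ≤ s) : ∫ x in Iic (-s), pdf x ≤ Real.exp (-s^2/2) := by
  calc ∫ x in Iic (-s), pdf x = ∫ x in Iic (-s), pdf (-x) := by simp [pdf_even]
    _ = ∫ x in Ioi (-(-s)), pdf x := integral_comp_neg_Iic _ _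
    _ = ∫ x in Ioi s, pdf x := by rw [neg_neg]
    _ ≤ Real.exp (-s^2/2) := tail_Ioi hs

lemma exp_sq_integral_bound {l s : ℝ} (hl : 0 < l) (hs : 1 ≤ s) :
    ∫ x in (-s)..s, Real.exp (l * x^2) ≤ 2 * Real.exp (l * s^2) / (l * s) := by
  have hs0 : 0 < s := by linarith
  have hk : 0 < l * s := by positivity
  have mono : ∫ x in (-s)..s, Real.exp (l * x^2)
      ≤ ∫ x in (-s)..s, (Real.exp ((l*s) * x) + Real.exp (-((l*s) * x))) := by
    apply intervalIntegral.integral_mono_on (by linarith)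
      (Continuous.intervalIntegrable (by continuity) _ _)
      (Continuous.intervalIntegrable (by continuity) _ _)
    intro x hx
    rcases le_or_gt 0 x with h | h
    · have hxx : x^2 ≤ s*x := by nlinarith [hx.2]
      have hb : l * x^2 ≤ l*s*x := by
        calc l * x^2 ≤ l * (s*x) := mul_le_mul_of_nonneg_left hxx hl.le
          _ = l*s*x := by ring
      calc Real.exp (l*x^2) ≤ Real.exp (l*s*x) := Real.exp_le_exp.mpr hb
        _ ≤ _ := le_add_of_nonneg_right (Real.exp_pos _).le
    · have hxx : x^2 ≤ -(s*x) := by nlinarith [hx.1]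
      have hb : l * x^2 ≤ -(l*s*x) := by
        calc l * x^2 ≤ l * (-(s*x)) := mul_le_mul_of_nonneg_left hxx hl.le
          _ = -(l*s*x) := by ring
      calc Real.exp (l*x^2) ≤ Real.exp (-(l*s*x)) := Real.exp_le_exp.mpr hb
        _ ≤ _ := le_add_of_nonneg_left (Real.exp_pos _).le
  have e1 : ∫ x in (-s)..s, Real.exp ((l*s) * x)
      = (l*s)⁻¹ * (Real.exp ((l*s)*s) - Real.exp ((l*s)*(-s))) := by
    rw [intervalIntegral.integral_comp_mul_left (fun x => Real.exp x) hk.ne',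
      integral_exp, smul_eq_mul]
  have e2 : ∫ x in (-s)..s, Real.exp (-((l*s) * x))
      = (l*s)⁻¹ * (Real.exp ((l*s)*s) - Real.exp ((l*s)*(-s))) := by
    have : ∀ x : ℝ, Real.exp (-((l*s) * x)) = Real.exp ((-(l*s)) * x) := by
      intro x; rw [neg_mul]
    simp_rw [this]
    rw [intervalIntegral.integral_comp_mul_left (fun x => Real.exp x) (neg_ne_zero.mpr hk.ne'),
      integral_exp, smul_eq_mul]
    have hxs : -(l*s) * s = (l*s)*(-s) := by ring
    have hxs2 : -(l*s) * -s = (l*s)*s := by ring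
    rw [hxs, hxs2]
    field_simp
    ring
  rw [intervalIntegral.integral_add
    (Continuous.intervalIntegrable (by continuity) _ _)
    (Continuous.intervalIntegrable (by continuity) _ _), e1, e2] at mono
  refine mono.trans ?_
  have hE : (l*s)*s = l * s^2 := by ring
  rw [hE, div_eq_mul_inv]
  have hinv : (0:ℝ) ≤ (l*s)⁻¹ := by positivity
  nlinarith [Real.exp_pos ((l*s)*(-s)), mul_nonneg hinv (Real.exp_pos ((l*s)*(-s))).le]

lemma pdf_continuous : Continuous pdf := by unfold pdf; continuity

lemma I1_eq {cn r sn : ℝ} (hc0 : 0 < cn) (hc1 : cn < 1) (hr : r = Real.sqrt (1-cn))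
    (hsn : 0 ≤ sn) :
    ∫ x, (Set.Icc (-sn) sn).indicator (fun y => Real.exp (cn/2 * y^2)) x * pdf x
      = r⁻¹ * (2 * Phi (r * sn) - 1) := by
  have h1c : 0 < 1 - cn := by linarith
  have hrpos : 0 < r := hr ▸ Real.sqrt_pos.mpr h1c
  have hr2 : r^2 = 1 - cn := by rw [hr]; exact Real.sq_sqrt h1c.le
  have hpt : ∀ x : ℝ, Real.exp (cn/2 * x^2) * pdf x = pdf (r * x) := by
    intro x
    simp only [pdf]
    rw [mul_left_comm, ← Real.exp_add]
    congr 1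
    have hrx : (r*x)^2 = (1-cn)*x^2 := by rw [mul_pow, hr2]
    rw [hrx]; ring
  calc ∫ x, (Set.Icc (-sn) sn).indicator (fun y => Real.exp (cn/2 * y^2)) x * pdf x
      = ∫ x, (Set.Icc (-sn) sn).indicator (fun y => Real.exp (cn/2 * y^2) * pdf y) x := by
        congr 1; funext x; rw [Set.indicator_mul_left]
    _ = ∫ x in Icc (-sn) sn, Real.exp (cn/2 * x^2) * pdf x := integral_indicator measurableSet_Icc
    _ = ∫ x in Icc (-sn) sn, pdf (r * x) := by
        apply setIntegral_congr_fun measurableSet_Icc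
        intro x _; exact hpt x
    _ = ∫ x in Ioc (-sn) sn, pdf (r * x) := integral_Icc_eq_integral_Ioc
    _ = ∫ x in (-sn)..sn, pdf (r * x) := (intervalIntegral.integral_of_le (by linarith)).symm
    _ = r⁻¹ * (2 * Phi (r * sn) - 1) := integral_scaled hrpos hsn

lemma I2_bound {cn sn l : ℝ} (hl : l = (2*cn-1)/2) (hc : 3/4 ≤ cn) (hs : 1 ≤ sn) :
    ∫ x, ((Set.Icc (-sn) sn).indicator (fun y => Real.exp (cn/2 * y^2)) x)^2 * pdf x
      ≤ 8 * Real.exp (l * sn^2) := by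
  have hl4 : 1/4 ≤ l := by rw [hl]; linarith
  have hlpos : 0 < l := by linarith
  have hsn0 : 0 < sn := by linarith
  have hpt : ∀ x : ℝ, ((Set.Icc (-sn) sn).indicator (fun y => Real.exp (cn/2 * y^2)) x)^2 * pdf x
      = (Set.Icc (-sn) sn).indicator (fun y => Real.exp (cn * y^2) * pdf y) x := by
    intro x
    by_cases hx : x ∈ Icc (-sn) sn
    · rw [Set.indicator_of_mem hx, Set.indicator_of_mem hx, pow_two, ← Real.exp_add]
      congr 2; ring
    · rw [Set.indicator_of_notMem hx, Set.indicator_of_notMem hx]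
      norm_num
  have step1 : ∫ x, ((Set.Icc (-sn) sn).indicator (fun y => Real.exp (cn/2 * y^2)) x)^2 * pdf x
      = ∫ x in Icc (-sn) sn, Real.exp (cn * x^2) * pdf x := by
    simp_rw [hpt]
    exact integral_indicator measurableSet_Icc
  have step2 : ∫ x in Icc (-sn) sn, Real.exp (cn * x^2) * pdf x
      ≤ ∫ x in Icc (-sn) sn, Real.exp (l * x^2) := by
    apply setIntegral_mono_on
      ((Continuous.mul (by continuity) pdf_continuous).integrableOn_Icc)
      ((by continuity : Continuous fun x : ℝ => Real.exp (l * x^2)).integrableOn_Icc)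
      measurableSet_Icc
    intro x _
    have : Real.exp (cn * x^2) * pdf x = (Real.sqrt (2*Real.pi))⁻¹ * Real.exp (l * x^2) := by
      simp only [pdf]
      rw [mul_left_comm, ← Real.exp_add]
      congr 1
      rw [hl]; ring
    show Real.exp (cn * x^2) * pdf x ≤ Real.exp (l * x^2)
    rw [this]
    have h1 : (Real.sqrt (2*Real.pi))⁻¹ ≤ 1 := by
      rw [inv_le_one_iff₀]; right; exact sqrt_two_pi_ge_one
    nlinarith [Real.exp_pos (l * x^2)]
  have step3 : ∫ x in Icc (-sn) sn, Real.exp (l * x^2)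
      = ∫ x in (-sn)..sn, Real.exp (l * x^2) := by
    rw [integral_Icc_eq_integral_Ioc, intervalIntegral.integral_of_le (by linarith)]
  have step4 := exp_sq_integral_bound hlpos hs
  have hls : 1 ≤ 4 * (l * sn) := by nlinarith
  have step5 : 2 * Real.exp (l * sn^2) / (l * sn) ≤ 8 * Real.exp (l * sn^2) := by
    rw [div_le_iff₀ (by positivity)]
    nlinarith [Real.exp_pos (l * sn^2)]
  linarith [step1, step2, step3.le, step3.ge]

lemma tail_measure {sn : ℝ} (hs : 1 ≤ sn) :
    (gaussianReal 0 1) (Set.Icc (-sn) sn)ᶜ ≤ ENNReal.ofReal (2 * Real.exp (-sn^2/2)) := by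
  have hsub : (Icc (-sn) sn)ᶜ ⊆ Iio (-sn) ∪ Ioi sn := by
    intro x hx
    simp only [mem_compl_iff, mem_Icc, not_and_or, not_le] at hx
    rcases hx with h | h
    · exact Or.inl h
    · exact Or.inr h
  refine (measure_mono hsub).trans ((measure_union_le _ _).trans ?_)
  have h1 : (gaussianReal 0 1) (Iio (-sn)) ≤ ENNReal.ofReal (Real.exp (-sn^2/2)) := by
    refine (measure_mono Iio_subset_Iic_self).trans ?_
    rw [gaussianReal_apply_eq_integral 0 one_ne_zero, pdf_eq]
    exact ENNReal.ofReal_le_ofReal (tail_Iic hs)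
  have h2 : (gaussianReal 0 1) (Ioi sn) ≤ ENNReal.ofReal (Real.exp (-sn^2/2)) := by
    rw [gaussianReal_apply_eq_integral 0 one_ne_zero, pdf_eq]
    exact ENNReal.ofReal_le_ofReal (tail_Ioi hs)
  calc (gaussianReal 0 1) (Iio (-sn)) + (gaussianReal 0 1) (Ioi sn)
      ≤ ENNReal.ofReal (Real.exp (-sn^2/2)) + ENNReal.ofReal (Real.exp (-sn^2/2)) :=
        add_le_add h1 h2
    _ = ENNReal.ofReal (2 * Real.exp (-sn^2/2)) := by
        rw [← ENNReal.ofReal_add (Real.exp_pos _).le (Real.exp_pos _).le]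
        norm_num [two_mul]

end Stmt16Aux

open Stmt16Aux

/-- Weak-law behavior of `(√(1-cₙ)/n) ∑ exp(cₙ zᵢ²/2)` for i.i.d. standard normals
when `cₙ ∈ (0,1)` and `cₙ → 1`: the difference with
`2Φ(√((2(1-cₙ)/cₙ) log(n/√(1-cₙ)))) - 1` tends to `0` in probability. -/
theorem stmt16 {Ω : Type*} [MeasurableSpace Ω] (P : Measure Ω) [IsProbabilityMeasure P]
    (c : ℕ → ℝ) (hc : ∀ n, c n ∈ Set.Ioo (0 : ℝ) 1)
    (hc1 : Tendsto c atTop (nhds 1))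
    (z : ℕ → Ω → ℝ)
    (hindep : iIndepFun z P)
    (hlaw : ∀ i, P.map (z i) = gaussianReal 0 1) :
    TendstoInMeasure P
      (fun n ω =>
        Real.sqrt (1 - c n) / n * ∑ i ∈ Finset.range n, Real.exp (c n / 2 * z i ω ^ 2) -
          (2 * Phi (Real.sqrt (2 * (1 - c n) / c n *
            Real.log (n / Real.sqrt (1 - c n)))) - 1))
      atTop (fun _ => 0) := by
  classical
  have hzm : ∀ i, AEMeasurable (z i) P := by
    intro i
    by_contra h
    have h0 := Measure.map_of_not_aemeasurable (f := z i) (μ := P) h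
    rw [hlaw i] at h0
    have huniv : (gaussianReal 0 1) Set.univ = 1 := measure_univ
    rw [h0] at huniv
    simp at huniv
  rw [tendstoInMeasure_iff_dist]
  intro ε hε
  have h1c0 : Tendsto (fun n => 1 - c n) atTop (nhds 0) := by
    have := hc1.const_sub (1:ℝ)
    simpa using this
  have hsq : Tendsto (fun n => Real.sqrt (1 - c n)) atTop (nhds 0) := by
    have := h1c0.sqrt
    simpa using this
  have hu : Tendsto (fun n => (2 + 8/ε^2) * Real.sqrt (1 - c n)) atTop (nhds 0) := by
    have := hsq.const_mul ((2:ℝ) + 8/ε^2)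
    simpa using this
  have hupper : Tendsto (fun n => ENNReal.ofReal ((2 + 8/ε^2) * Real.sqrt (1 - c n)))
      atTop (nhds 0) := by
    have := ENNReal.tendsto_ofReal hu
    simpa using this
  refine tendsto_of_tendsto_of_tendsto_of_le_of_le' tendsto_const_nhds hupper
    (Eventually.of_forall fun n => zero_le) ?_
  have hgood : ∀ᶠ n : ℕ in atTop, 3 ≤ n ∧ 3/4 ≤ c n :=
    (eventually_ge_atTop 3).and (hc1.eventually (eventually_ge_nhds (by norm_num)))
  filter_upwards [hgood] with n hn
  obtain ⟨hn3, hc34⟩ := hn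
  simp only [dist_zero_right, Real.norm_eq_abs]
  -- basic facts about the constants
  have hc0 : 0 < c n := (hc n).1
  have hcn1 : c n < 1 := (hc n).2
  have h1c : 0 < 1 - c n := by linarith
  have hnR : (3:ℝ) ≤ (n:ℝ) := by exact_mod_cast hn3
  have hnpos : (0:ℝ) < n := by linarith
  set r : ℝ := Real.sqrt (1 - c n) with hr_def
  have hr : 0 < r := Real.sqrt_pos.mpr h1c
  have hr2 : r^2 = 1 - c n := Real.sq_sqrt h1c.le
  have hrle1 : r ≤ 1 := by
    have h1 : Real.sqrt (1 - c n) ≤ Real.sqrt 1 := Real.sqrt_le_sqrt (by linarith)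
    rw [Real.sqrt_one] at h1
    rw [hr_def]
    exact h1
  set β : ℝ := (n:ℝ) / r with hβ_def
  have hβpos : 0 < β := by positivity
  have hnβ : (n:ℝ) ≤ β := by
    rw [hβ_def, le_div_iff₀ hr]
    nlinarith
  set L : ℝ := Real.log β with hL_def
  have hL1 : 1 ≤ L := by
    have h3 : (1:ℝ) ≤ Real.log 3 := by
      rw [Real.le_log_iff_exp_le (by norm_num)]
      exact (Real.exp_one_lt_d9).le.trans (by norm_num)
    have hmono : Real.log 3 ≤ L := Real.log_le_log (by norm_num) (hnR.trans hnβ)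
    linarith
  have hexpL : Real.exp L = β := by rw [hL_def, Real.exp_log hβpos]
  set sn : ℝ := Real.sqrt (2 / c n * L) with hsn_def
  have hprod2 : 2 ≤ 2 / c n * L := by
    have h2c : 2 ≤ 2 / c n := by rw [le_div_iff₀ hc0]; linarith
    nlinarith
  have hsn1 : 1 ≤ sn := by
    have h1 : Real.sqrt 1 ≤ Real.sqrt (2 / c n * L) := Real.sqrt_le_sqrt (by linarith)
    rw [Real.sqrt_one] at h1
    rw [hsn_def]
    exact h1
  have hsn0 : 0 < sn := by linarith
  have hsn2 : sn^2 = 2 / c n * L := Real.sq_sqrt (by linarith)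
  set gn : ℝ → ℝ := (Set.Icc (-sn) sn).indicator (fun y => Real.exp (c n/2 * y^2))
    with hgn_def
  have hgm : Measurable gn := Measurable.indicator (by fun_prop) measurableSet_Icc
  set a : ℝ := r / n with ha_def
  have ha : 0 < a := by positivity
  -- integral transfer
  have hmap : ∀ (f : ℝ → ℝ), Measurable f → ∀ i : ℕ,
      ∫ ω, f (z i ω) ∂P = ∫ x, f x * pdf x := by
    intro f hf i
    rw [← integral_map (hzm i) hf.aestronglyMeasurable, hlaw i, integral_gaussian_eq]
  set I1 : ℝ := ∫ x, gn x * pdf x with hI1_def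
  set I2 : ℝ := ∫ x, (gn x)^2 * pdf x with hI2_def
  have hET : ∀ i, ∫ ω, gn (z i ω) ∂P = I1 := fun i => hmap gn hgm i
  have hET2 : ∀ i, ∫ ω, (gn (z i ω))^2 ∂P = I2 := by
    intro i
    have := hmap (fun x => (gn x)^2) (hgm.pow_const 2) i
    simpa using this
  -- boundedness, Memℒp
  have hbd : ∀ x, |gn x| ≤ β := by
    intro x
    rw [hgn_def]
    by_cases hx : x ∈ Set.Icc (-sn) sn
    · rw [Set.indicator_of_mem hx, abs_of_nonneg (Real.exp_pos _).le]
      have hx2 : x^2 ≤ sn^2 := sq_le_sq' hx.1 hx.2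
      have harg : c n/2 * x^2 ≤ L := by
        have h5 : c n/2 * x^2 ≤ c n/2 * sn^2 := by nlinarith
        rw [hsn2] at h5
        have heq : c n/2 * (2/c n * L) = L := by field_simp
        linarith
      calc Real.exp (c n/2 * x^2) ≤ Real.exp L := Real.exp_le_exp.mpr harg
        _ = β := hexpL
    · rw [Set.indicator_of_notMem hx]
      simpa using hβpos.le
  have hTmem : ∀ i : ℕ, MemLp (fun ω => gn (z i ω)) 2 P := by
    intro i
    refine (memLp_top_of_bound ((hgm.comp_aemeasurable (hzm i)).aestronglyMeasurable) β
      (Eventually.of_forall fun ω => ?_)).mono_exponent le_top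
    simpa [Real.norm_eq_abs] using hbd (z i ω)
  -- the truncated sum
  set W : Ω → ℝ := fun ω => ∑ i ∈ Finset.range n, gn (z i ω) with hW_def
  have hWeq : W = ∑ i ∈ Finset.range n, (fun ω => gn (z i ω)) := by
    funext ω; rw [hW_def]; simp
  have hWmem : MemLp W 2 P := hWeq ▸ memLp_finsetSum' _ (fun i _ => hTmem i)
  have hEW : ∫ ω, W ω ∂P = n * I1 := by
    rw [hW_def]
    rw [integral_finset_sum _ (fun i _ => (hTmem i).integrable one_le_two)]
    simp_rw [hET]
    rw [Finset.sum_const, Finset.card_range, nsmul_eq_mul]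
  have hVar : variance W P ≤ n * I2 := by
    have hvs : variance W P = ∑ i ∈ Finset.range n, variance (fun ω => gn (z i ω)) P := by
      rw [hWeq]
      apply IndepFun.variance_sum (fun i _ => hTmem i)
      intro i _ j _ hij
      exact (hindep.indepFun hij).comp hgm hgm
    rw [hvs]
    have hvi : ∀ i ∈ Finset.range n, variance (fun ω => gn (z i ω)) P ≤ I2 := by
      intro i _
      calc variance (fun ω => gn (z i ω)) P
          ≤ ∫ ω, ((fun ω => gn (z i ω)) ^ 2) ω ∂P :=
            variance_le_expectation_sq ((hgm.comp_aemeasurable (hzm i)).aestronglyMeasurable)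
        _ = ∫ ω, (gn (z i ω))^2 ∂P := by simp [Pi.pow_apply]
        _ = I2 := hET2 i
    calc (∑ i ∈ Finset.range n, variance (fun ω => gn (z i ω)) P)
        ≤ ∑ _i ∈ Finset.range n, I2 := Finset.sum_le_sum hvi
      _ = n * I2 := by rw [Finset.sum_const, Finset.card_range, nsmul_eq_mul]
  -- Chebyshev
  have hcheb := meas_ge_le_variance_div_sq (μ := P) hWmem (div_pos hε ha)
  -- tail bound for each coordinate
  have htail : ∀ i : ℕ, P {ω | z i ω ∉ Set.Icc (-sn) sn} ≤ ENNReal.ofReal (2*(r/n)) := by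
    intro i
    have hset : {ω | z i ω ∉ Set.Icc (-sn) sn} = z i ⁻¹' (Set.Icc (-sn) sn)ᶜ := rfl
    rw [hset, ← Measure.map_apply_of_aemeasurable (hzm i) (measurableSet_Icc.compl), hlaw i]
    refine (tail_measure hsn1).trans (ENNReal.ofReal_le_ofReal ?_)
    have hexp : Real.exp (-sn^2/2) ≤ r/n := by
      have h1 : -sn^2/2 = -(L / c n) := by rw [hsn2]; field_simp
      have h2 : L ≤ L / c n := by rw [le_div_iff₀ hc0]; nlinarith
      have h4 : Real.exp (-L) = r / n := by
        rw [Real.exp_neg, hexpL, hβ_def, inv_div]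
      rw [h1]
      calc Real.exp (-(L/c n)) ≤ Real.exp (-L) := Real.exp_le_exp.mpr (by linarith)
        _ = r/n := h4
    linarith
  -- main expectation identity
  have hM : a * ((n:ℝ) * I1) = 2 * Phi (Real.sqrt (2 * (1 - c n) / c n * L)) - 1 := by
    have hI1 : I1 = r⁻¹ * (2 * Phi (r * sn) - 1) := by
      rw [hI1_def, hgn_def]
      exact I1_eq hc0 hcn1 hr_def hsn0.le
    have htn : Real.sqrt (2 * (1 - c n) / c n * L) = r * sn := by
      rw [show 2 * (1 - c n) / c n * L = (1 - c n) * (2 / c n * L) by ring,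
        Real.sqrt_mul h1c.le, ← hr_def, ← hsn_def]
    rw [htn, hI1, ha_def]
    field_simp
  -- event inclusion and final bound
  refine le_trans (measure_mono (?_ : _ ⊆ (⋃ i ∈ Finset.range n,
      {ω | z i ω ∉ Set.Icc (-sn) sn}) ∪ {ω | ε/a ≤ |W ω - ∫ ω', W ω' ∂P|})) ?_
  · intro ω hω
    simp only [Set.mem_setOf_eq] at hω
    by_cases hA : ω ∈ ⋃ i ∈ Finset.range n, {ω | z i ω ∉ Set.Icc (-sn) sn}
    · exact Set.mem_union_left _ hA
    · refine Set.mem_union_right _ ?_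
      simp only [Set.mem_iUnion, Set.mem_setOf_eq, exists_prop] at hA
      push_neg at hA
      have hsum : (∑ i ∈ Finset.range n, Real.exp (c n / 2 * z i ω ^ 2)) = W ω := by
        rw [hW_def]
        apply Finset.sum_congr rfl
        intro i hi
        rw [hgn_def, Set.indicator_of_mem (hA i hi)]
      have hrw : r / ↑n * (∑ i ∈ Finset.range n, Real.exp (c n / 2 * z i ω ^ 2)) -
          (2 * Phi (Real.sqrt (2 * (1 - c n) / c n * L)) - 1)
          = a * (W ω - ∫ ω', W ω' ∂P) := by
        rw [hsum, hEW, ← hM, ha_def]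
        ring
      rw [hrw, abs_mul, abs_of_pos ha] at hω
      rw [Set.mem_setOf_eq, div_le_iff₀ ha]
      linarith [hω]
  · refine (measure_union_le _ _).trans ?_
    have hA : P (⋃ i ∈ Finset.range n, {ω | z i ω ∉ Set.Icc (-sn) sn})
        ≤ ENNReal.ofReal (2*r) := by
      refine (measure_biUnion_finset_le _ _).trans ?_
      calc ∑ i ∈ Finset.range n, P {ω | z i ω ∉ Set.Icc (-sn) sn}
          ≤ ∑ _i ∈ Finset.range n, ENNReal.ofReal (2*(r/n)) :=
            Finset.sum_le_sum (fun i _ => htail i)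
        _ = (n : ENNReal) * ENNReal.ofReal (2*(r/n)) := by
            rw [Finset.sum_const, Finset.card_range, nsmul_eq_mul]
        _ = ENNReal.ofReal ((n:ℝ) * (2*(r/n))) := by
            rw [← ENNReal.ofReal_natCast n, ← ENNReal.ofReal_mul (Nat.cast_nonneg n)]
        _ = ENNReal.ofReal (2*r) := by
            congr 1
            field_simp
    have hB : P {ω | ε/a ≤ |W ω - ∫ ω', W ω' ∂P|} ≤ ENNReal.ofReal ((8*r)/ε^2) := by
      refine hcheb.trans (ENNReal.ofReal_le_ofReal ?_)
      set l : ℝ := (2*c n - 1)/2 with hl_def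
      have hI2b : I2 ≤ 8 * Real.exp (l * sn^2) := by
        rw [hI2_def, hgn_def]
        exact I2_bound hl_def hc34 hsn1
      have hlsn : l * sn^2 = 2*L - L/c n := by
        rw [hsn2, hl_def]
        field_simp
      have hLc : L ≤ L / c n := by rw [le_div_iff₀ hc0]; nlinarith
      have hE : Real.exp (l * sn^2) ≤ β := by
        rw [hlsn]
        calc Real.exp (2*L - L/c n) ≤ Real.exp (2*L - L) := Real.exp_le_exp.mpr (by linarith)
          _ = Real.exp L := by norm_num [two_mul]
          _ = β := hexpL
      have hvb : variance W P ≤ 8 * ((n:ℝ) * β) := by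
        calc variance W P ≤ n * I2 := hVar
          _ ≤ n * (8 * Real.exp (l * sn^2)) := mul_le_mul_of_nonneg_left hI2b hnpos.le
          _ ≤ n * (8 * β) := mul_le_mul_of_nonneg_left
              (mul_le_mul_of_nonneg_left hE (by norm_num)) hnpos.le
          _ = 8 * ((n:ℝ) * β) := by ring
      have h2 : (ε/a)^2 = ε^2/a^2 := by rw [div_pow]
      rw [h2, div_div_eq_mul_div]
      refine (div_le_div_iff_of_pos_right (by positivity : (0:ℝ) < ε^2)).mpr ?_
      calc variance W P * a^2 ≤ 8 * ((n:ℝ) * β) * a^2 :=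
            mul_le_mul_of_nonneg_right hvb (sq_nonneg a)
        _ = 8 * r := by
            rw [ha_def, hβ_def]
            field_simp
    calc P (⋃ i ∈ Finset.range n, {ω | z i ω ∉ Set.Icc (-sn) sn})
          + P {ω | ε/a ≤ |W ω - ∫ ω', W ω' ∂P|}
        ≤ ENNReal.ofReal (2*r) + ENNReal.ofReal ((8*r)/ε^2) := add_le_add hA hB
      _ = ENNReal.ofReal (2*r + (8*r)/ε^2) := by
          rw [← ENNReal.ofReal_add (by positivity) (by positivity)]
      _ = ENNReal.ofReal ((2 + 8/ε^2) * r) := by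
          congr 1
          field_simp
end

section
/- Fix $p,r\in(0,1)$. The equation $-2\log\big(\sqrt{\pi}\big(\tfrac{1}{k}-\tfrac12\big)\big) = \log k + 2\log\tfrac{p}{(1-p)(1-r)}+\tfrac{2}{k}$ has a unique solution $k^*\in(0,2)$. -/
/-!
Since `√π (1/k - 1/2) = √π (2 - k) / (2k)`, the equation says that
`log k - 2 log (2 - k) - 2/k` equals a constant depending only on `p` and `r`. On `(0, 2)` this
function is continuous and strictly increasing, and it tends to `-∞` at `0` and to `+∞` at `2`,
so it takes every real value exactly once.
-/

open Real Filter Topology Set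

noncomputable def fixedPointProfile (k : ℝ) : ℝ := log k - 2 * log (2 - k) - 2 / k

lemma strictMonoOn_fixedPointProfile : StrictMonoOn fixedPointProfile (Ioo 0 2) := by
  intro x ⟨hx0, hx2⟩ y ⟨hy0, hy2⟩ hxy
  have hlog : log x < log y := log_lt_log hx0 hxy
  have hlog_sub : log (2 - y) < log (2 - x) := log_lt_log (by linarith) (by linarith)
  have hdiv : 2 / y < 2 / x := div_lt_div_of_pos_left two_pos hx0 hxy
  unfold fixedPointProfile
  linarith

lemma continuousOn_fixedPointProfile : ContinuousOn fixedPointProfile (Ioo 0 2) := by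
  unfold fixedPointProfile
  refine ContinuousOn.sub (ContinuousOn.sub ?_ ?_) ?_
  · exact continuousOn_log.mono fun x hx => hx.1.ne'
  · exact continuousOn_const.mul <| (continuousOn_const.sub continuousOn_id).log
      fun x hx => (sub_pos.2 hx.2).ne'
  · exact continuousOn_const.div continuousOn_id fun x hx => hx.1.ne'

lemma tendsto_fixedPointProfile_nhdsGT_zero :
    Tendsto fixedPointProfile (𝓝[>] 0) atBot := by
  refine tendsto_atBot_mono' _ ?_ tendsto_log_nhdsGT_zero
  filter_upwards [Ioo_mem_nhdsGT one_pos] with k ⟨hk0, hk1⟩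
  have : 0 ≤ log (2 - k) := log_nonneg (by linarith)
  have : 0 < 2 / k := by positivity
  unfold fixedPointProfile
  linarith

lemma tendsto_two_sub_nhdsLT_two : Tendsto (fun k : ℝ => 2 - k) (𝓝[<] 2) (𝓝[>] 0) := by
  refine tendsto_nhdsWithin_iff.2 ⟨?_, ?_⟩
  · have h : Tendsto (fun k : ℝ => 2 - k) (𝓝 2) (𝓝 (2 - 2)) := tendsto_const_nhds.sub tendsto_id
    rw [sub_self] at h
    exact h.mono_left nhdsWithin_le_nhds
  · filter_upwards [self_mem_nhdsWithin] with k (hk : k < 2)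
    exact sub_pos.2 hk

lemma tendsto_fixedPointProfile_nhdsLT_two :
    Tendsto fixedPointProfile (𝓝[<] 2) atTop := by
  have hlog : Tendsto (fun k => -2 * log (2 - k) - 2) (𝓝[<] 2) atTop :=
    tendsto_atTop_add_const_right _ _ <|
      (tendsto_log_nhdsGT_zero.comp tendsto_two_sub_nhdsLT_two).const_mul_atBot_of_neg
        (by norm_num)
  refine tendsto_atTop_mono' _ ?_ hlog
  filter_upwards [Ioo_mem_nhdsLT (by norm_num : (1 : ℝ) < 2)] with k ⟨hk1, hk2⟩
  have : 0 ≤ log k := log_nonneg hk1.le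
  have : 2 / k ≤ 2 := by rw [div_le_iff₀ (by linarith)]; linarith
  unfold fixedPointProfile
  linarith

lemma surjOn_fixedPointProfile : SurjOn fixedPointProfile (Ioo 0 2) univ := by
  have h02 : (0 : ℝ) < 2 := two_pos
  exact continuousOn_fixedPointProfile.surjOn_of_tendsto (nonempty_Ioo.2 h02)
    ((tendsto_comp_coe_Ioo_atBot h02).2 tendsto_fixedPointProfile_nhdsGT_zero)
    ((tendsto_comp_coe_Ioo_atTop h02).2 tendsto_fixedPointProfile_nhdsLT_two)

lemma existsUnique_fixedPointProfile_eq (c : ℝ) :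
    ∃! k, k ∈ Ioo (0 : ℝ) 2 ∧ fixedPointProfile k = c := by
  obtain ⟨k, hk, hkc⟩ := surjOn_fixedPointProfile (mem_univ c)
  exact ⟨k, ⟨hk, hkc⟩, fun y ⟨hy, hyc⟩ =>
    strictMonoOn_fixedPointProfile.injOn hy hk (hyc.trans hkc.symm)⟩

lemma neg_two_mul_log_sqrt_pi_mul {k : ℝ} (hk : k ∈ Ioo (0 : ℝ) 2) :
    -2 * log (√π * (1 / k - 1 / 2)) = 2 * log 2 - log π + 2 * log k - 2 * log (2 - k) := by
  obtain ⟨hk0, hk2⟩ := hk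
  have hsub : 1 / k - 1 / 2 = (2 - k) / (2 * k) := by field_simp
  rw [hsub, log_mul (by positivity) (div_pos (by linarith) (by positivity)).ne',
    log_sqrt pi_pos.le, log_div (by linarith) (by positivity), log_mul two_ne_zero hk0.ne']
  ring

theorem stmt19_general (p r : ℝ) :
    ∃! k : ℝ, k ∈ Set.Ioo (0 : ℝ) 2 ∧
      -2 * Real.log (Real.sqrt Real.pi * (1 / k - 1 / 2)) =
        Real.log k + 2 * Real.log (p / ((1 - p) * (1 - r))) + 2 / k := by
  set c := 2 * log (p / ((1 - p) * (1 - r)))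
  have hequiv : ∀ k ∈ Ioo (0 : ℝ) 2, (-2 * log (√π * (1 / k - 1 / 2)) = log k + c + 2 / k ↔
      fixedPointProfile k = c + log π - 2 * log 2) := fun k hk => by
    rw [neg_two_mul_log_sqrt_pi_mul hk, fixedPointProfile]
    constructor <;> intro h <;> linarith
  exact (existsUnique_congr fun k => and_congr_right (hequiv k)).2
    (existsUnique_fixedPointProfile_eq _)

/-- The fixed-point equation for the asymptotic Type II MLE false positive
probability has a unique solution `k* ∈ (0,2)`. -/
theorem stmt19 (p r : ℝ) (hp : p ∈ Set.Ioo (0 : ℝ) 1) (hr : r ∈ Set.Ioo (0 : ℝ) 1) :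
    ∃! k : ℝ, k ∈ Set.Ioo (0 : ℝ) 2 ∧
      -2 * Real.log (Real.sqrt Real.pi * (1 / k - 1 / 2)) =
        Real.log k + 2 * Real.log (p / ((1 - p) * (1 - r))) + 2 / k :=
  stmt19_general p r
end
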